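/- arXiv:1111.0881 — 2 statements merged into one kernel-verified Lean document; each statement's English description precedes it below -/
import Mathlib

section
/- For real μ > -1, a > 0, and b > 0, the integral ∫₀^∞ x^μ · exp(-a x²) · ln(b x) dx equals (1/(4 a^((μ+1)/2))) · Γ((μ+1)/2) · (ln(b²/a) + ψ((μ+1)/2)), where ψ is the digamma function. -/
/-! With `s = (μ + 1) / 2`, the substitution `t = a x²` turns the integral into
`a^(-s) / 4 · ∫₀^∞ e^(-t) t^(s-1) log ((b² / a) t) dt`. Splitting the logarithm leaves
`log (b² / a) · Γ(s) + Γ'(s)`, where `Γ'(s) = ∫₀^∞ e^(-t) t^(s-1) log t dt` comes from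
differentiating Euler's integral for the complex Gamma function under the integral sign. -/

open Real MeasureTheory

/-- The digamma function ψ = Γ'/Γ. -/
noncomputable def digamma (x : ℝ) : ℝ := deriv Real.Gamma x / Real.Gamma x

open Set

lemma abs_log_le_rpow_add_rpow_neg_div {t ε : ℝ} (ht : 0 < t) (hε : 0 < ε) :
    |log t| ≤ (t ^ ε + t ^ (-ε)) / ε := by
  have hup : log t ≤ t ^ ε / ε := log_le_rpow_div ht.le hε
  have hdn : -log t ≤ t ^ (-ε) / ε := by
    simpa [log_inv, inv_rpow ht.le, rpow_neg ht.le] using log_le_rpow_div (inv_pos.2 ht).le hε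
  have : 0 ≤ t ^ ε / ε := by positivity
  have : 0 ≤ t ^ (-ε) / ε := by positivity
  rw [abs_le, add_div]
  constructor <;> linarith

lemma integrableOn_exp_neg_mul_rpow_mul_log {s : ℝ} (hs : 0 < s) :
    IntegrableOn (fun t => exp (-t) * t ^ (s - 1) * log t) (Ioi 0) := by
  set ε := s / 2
  have hε : 0 < ε := half_pos hs
  -- dominated by the Gamma integrands at `s + ε` and `s - ε`
  have hdom := ((GammaIntegral_convergent (add_pos hs hε)).add
    (GammaIntegral_convergent (show 0 < s - ε by simp only [ε]; linarith))).div_const ε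
  refine hdom.mono' ?_ ?_
  · refine ContinuousOn.aestronglyMeasurable (fun t ht => ?_) measurableSet_Ioi
    have ht : t ≠ 0 := (mem_Ioi.1 ht).ne'
    exact ((continuous_exp.comp continuous_neg).continuousAt.mul
      (continuousAt_rpow_const t _ (Or.inl ht))).mul (continuousAt_log ht) |>.continuousWithinAt
  · filter_upwards [ae_restrict_mem measurableSet_Ioi] with t (ht : 0 < t)
    have hsplit : ∀ r, t ^ (s + r - 1) = t ^ (s - 1) * t ^ r := fun r => by
      rw [← rpow_add ht]; ring_nf
    calc ‖exp (-t) * t ^ (s - 1) * log t‖ = exp (-t) * t ^ (s - 1) * |log t| := by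
          rw [norm_mul, norm_mul, norm_of_nonneg (exp_pos _).le,
            norm_of_nonneg (rpow_nonneg ht.le _), norm_eq_abs]
      _ ≤ exp (-t) * t ^ (s - 1) * ((t ^ ε + t ^ (-ε)) / ε) :=
          mul_le_mul_of_nonneg_left (abs_log_le_rpow_add_rpow_neg_div ht hε) (by positivity)
      _ = (exp (-t) * t ^ (s + ε - 1) + exp (-t) * t ^ (s - ε - 1)) / ε := by
          rw [hsplit, sub_eq_add_neg s ε, hsplit]; ring

lemma hasDerivAt_Gamma_integral_mul_log {s : ℝ} (hs : 0 < s) :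
    HasDerivAt Gamma (∫ t in Ioi 0, exp (-t) * t ^ (s - 1) * log t) s := by
  have hs' : 0 < (s : ℂ).re := by simpa using hs
  have hGamma : Complex.Gamma =ᶠ[nhds (s : ℂ)] Complex.GammaIntegral := by
    filter_upwards [(isOpen_lt continuous_const Complex.continuous_re).mem_nhds hs']
      with z hz using Complex.Gamma_eq_integral hz
  have hderiv :=
    ((Complex.hasDerivAt_GammaIntegral hs').congr_of_eventuallyEq hGamma).real_of_complex
  have hintegral : ∫ t in Ioi (0 : ℝ), (t : ℂ) ^ ((s : ℂ) - 1) * ((log t : ℂ) * (exp (-t) : ℂ)) =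
      ((∫ t in Ioi 0, exp (-t) * t ^ (s - 1) * log t : ℝ) : ℂ) := by
    rw [← integral_complex_ofReal]
    refine setIntegral_congr_fun measurableSet_Ioi fun t ht => ?_
    rw [← Complex.ofReal_one, ← Complex.ofReal_sub, ← Complex.ofReal_cpow (le_of_lt ht)]
    push_cast
    ring
  rwa [hintegral, Complex.ofReal_re] at hderiv

lemma integral_rpow_mul_comp_mul_sq (F : ℝ → ℝ) {a : ℝ} (ha : 0 < a) (s : ℝ) :
    ∫ x in Ioi 0, x ^ (2 * s - 1) * F (a * x ^ 2) =
      a ^ (-s) / 2 * ∫ t in Ioi 0, t ^ (s - 1) * F t := by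
  have hsub := integral_comp_rpow_Ioi_of_pos (g := fun y => (a * y) ^ (s - 1) * F (a * y)) two_pos
  have hscale := integral_comp_mul_left_Ioi (fun t => t ^ (s - 1) * F t) 0 ha
  rw [mul_zero, smul_eq_mul] at hscale
  have hintegrand : ∀ x ∈ Ioi (0 : ℝ), x ^ (2 * s - 1) * F (a * x ^ 2) =
      a ^ (1 - s) / 2 *
        ((2 * x ^ ((2 : ℝ) - 1)) • ((a * x ^ (2 : ℝ)) ^ (s - 1) * F (a * x ^ (2 : ℝ)))) :=
      fun x (hx : 0 < x) => by
    have hpow : (a * x ^ 2) ^ (s - 1) = a ^ (s - 1) * x ^ (2 * s - 2) := by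
      rw [mul_rpow ha.le (by positivity), ← rpow_natCast, ← rpow_mul hx.le]
      ring_nf
    have hx' : x ^ (2 * s - 1) = x * x ^ (2 * s - 2) := by
      rw [show 2 * s - 1 = 1 + (2 * s - 2) by ring, rpow_add hx, rpow_one]
    have ha' : a ^ (1 - s) * a ^ (s - 1) = 1 := by rw [← rpow_add ha]; simp
    simp only [smul_eq_mul, rpow_two, hpow, hx', show (2 : ℝ) - 1 = 1 by norm_num, rpow_one]
    linear_combination (-(x * x ^ (2 * s - 2) * F (a * x ^ 2))) * ha'
  calc _ = a ^ (1 - s) / 2 * ∫ x in Ioi 0,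
        (2 * x ^ ((2 : ℝ) - 1)) • ((a * x ^ (2 : ℝ)) ^ (s - 1) * F (a * x ^ (2 : ℝ))) := by
        rw [← integral_const_mul]; exact setIntegral_congr_fun measurableSet_Ioi hintegrand
    _ = a ^ (1 - s) / 2 * (a⁻¹ * ∫ t in Ioi 0, t ^ (s - 1) * F t) := by rw [hsub, hscale]
    _ = _ := by
        rw [show a ^ (-s) = a ^ (1 - s) * a⁻¹ by rw [← rpow_neg_one, ← rpow_add ha]; ring_nf]
        ring

lemma integral_exp_neg_mul_rpow_mul_log_mul {s c : ℝ} (hs : 0 < s) (hc : c ≠ 0) :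
    ∫ t in Ioi 0, exp (-t) * t ^ (s - 1) * log (c * t) = Gamma s * (log c + digamma s) := by
  have hsplit : ∀ t ∈ Ioi (0 : ℝ), exp (-t) * t ^ (s - 1) * log (c * t) =
      log c * (exp (-t) * t ^ (s - 1)) + exp (-t) * t ^ (s - 1) * log t := fun t ht => by
    rw [log_mul hc (mem_Ioi.1 ht).ne']; ring
  rw [setIntegral_congr_fun measurableSet_Ioi hsplit,
    integral_add ((GammaIntegral_convergent hs).const_mul _)
      (integrableOn_exp_neg_mul_rpow_mul_log hs), integral_const_mul, ← Gamma_eq_integral hs,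
    (hasDerivAt_Gamma_integral_mul_log hs).deriv.symm, digamma, mul_add,
    mul_div_cancel₀ _ (Gamma_pos_of_pos hs).ne']
  ring

/-- For μ > -1, a > 0, b > 0:
∫₀^∞ x^μ exp(-a x²) ln(b x) dx = (1/(4 a^((μ+1)/2))) Γ((μ+1)/2) (ln(b²/a) + ψ((μ+1)/2)). -/
theorem stmt_1 (μ a b : ℝ) (hμ : -1 < μ) (ha : 0 < a) (hb : 0 < b) :
    ∫ x in Set.Ioi (0 : ℝ), x ^ μ * Real.exp (-a * x ^ 2) * Real.log (b * x) =
      1 / (4 * a ^ ((μ + 1) / 2)) * Real.Gamma ((μ + 1) / 2) *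
        (Real.log (b ^ 2 / a) + digamma ((μ + 1) / 2)) := by
  set s := (μ + 1) / 2
  have hs : 0 < s := by simp only [s]; linarith
  -- Under `t = a x²` one has `log (b x) = log ((b² / a) t) / 2`.
  have hintegrand : ∀ x ∈ Ioi (0 : ℝ), x ^ μ * exp (-a * x ^ 2) * log (b * x) =
      x ^ (2 * s - 1) * (exp (-(a * x ^ 2)) * log (b ^ 2 / a * (a * x ^ 2))) / 2 := fun x _ => by
    rw [show 2 * s - 1 = μ by simp only [s]; ring,
      show b ^ 2 / a * (a * x ^ 2) = (b * x) ^ 2 by field_simp, log_pow, neg_mul]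
    push_cast
    ring
  calc _ = (a ^ (-s) / 2 * ∫ t in Ioi 0, t ^ (s - 1) * (exp (-t) * log (b ^ 2 / a * t))) / 2 := by
        rw [setIntegral_congr_fun measurableSet_Ioi hintegrand, integral_div,
          integral_rpow_mul_comp_mul_sq (fun t => exp (-t) * log (b ^ 2 / a * t)) ha]
    _ = a ^ (-s) / 4 * Gamma s * (log (b ^ 2 / a) + digamma s) := by
        have hreorder : (fun t => t ^ (s - 1) * (exp (-t) * log (b ^ 2 / a * t))) =
            fun t => exp (-t) * t ^ (s - 1) * log (b ^ 2 / a * t) := funext fun t => by ring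
        rw [hreorder, integral_exp_neg_mul_rpow_mul_log_mul hs (by positivity)]
        ring
    _ = _ := by rw [rpow_neg ha.le]; ring
end

section
/- For the Tricomi–Bessel function C_ν, the integral ∫₀^∞ C_ν(x) dx (as an improper integral) equals 1/Γ(ν) for real ν > 1. -/
/-
Termwise differentiation of the series gives C_ν' = -C_{ν+1}, so -C_{ν-1} is a primitive of C_ν
and ∫₀^R C_ν = 1/Γ(ν) - C_{ν-1}(R). It remains to see that C_μ(x) → 0 as x → ∞ for μ = ν - 1.
The recurrence C_μ = (μ+1) C_{μ+1} - x C_{μ+2} says that f = C_μ solves x f'' + (μ+1) f' + f = 0.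
With p = μ/2 + 1/4, the function A = x^p f solves x² A'' + (x/2) A' + (x + (1/4 - μ²)/4) A = 0,
whose energy A² + x A'² has logarithmic derivative O(x^{-3/2}); so the energy stays bounded and
C_μ(x) = O(x^{-p}), which tends to 0 as soon as μ > -1/2.
-/

open Filter Topology Real

/-- The Tricomi–Bessel function C_ν(x) = Σ_{k≥0} (-1)^k x^k / (k! Γ(ν+k+1)). -/
noncomputable def tricomiC (ν x : ℝ) : ℝ :=
  ∑' k : ℕ, (-1) ^ k * x ^ k / ((k.factorial : ℝ) * Real.Gamma (ν + k + 1))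

open scoped Nat

section FactorialDecay

variable {a : ℕ → ℝ} {C r : ℝ}

theorem abs_mul_pow_le_of_abs_le (ha : ∀ k, |a k| ≤ C * r ^ k / k !) {x R : ℝ} (hxR : |x| ≤ R)
    (k : ℕ) : |a k * x ^ k| ≤ C * (r * R) ^ k / k ! := by
  calc |a k * x ^ k| = |a k| * |x| ^ k := by rw [abs_mul, abs_pow]
    _ ≤ C * r ^ k / k ! * R ^ k :=
      mul_le_mul (ha k) (pow_le_pow_left₀ (abs_nonneg x) hxR k) (by positivity)
        ((abs_nonneg _).trans (ha k))
    _ = C * (r * R) ^ k / k ! := by ring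

theorem summable_mul_pow_of_abs_le (ha : ∀ k, |a k| ≤ C * r ^ k / k !) (x : ℝ) :
    Summable fun k => a k * x ^ k := by
  refine .of_norm_bounded ?_ (abs_mul_pow_le_of_abs_le ha le_rfl)
  simpa only [mul_div_assoc] using (Real.summable_pow_div_factorial _).mul_left C

theorem abs_succ_mul_le_of_abs_le (ha : ∀ k, |a k| ≤ C * r ^ k / k !) (k : ℕ) :
    |(k + 1) * a (k + 1)| ≤ C * r * r ^ k / k ! := by
  calc |(k + 1) * a (k + 1)| = (k + 1) * |a (k + 1)| := by
        rw [abs_mul, abs_of_pos (by positivity : (0 : ℝ) < k + 1)]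
    _ ≤ (k + 1) * (C * r ^ (k + 1) / (k + 1) !) := by gcongr; exact ha _
    _ = C * r * r ^ k / k ! := by
        rw [Nat.factorial_succ]; push_cast; field_simp; ring

theorem hasDerivAt_tsum_mul_pow (ha : ∀ k, |a k| ≤ C * r ^ k / k !) (x : ℝ) :
    HasDerivAt (fun y => ∑' k, a k * y ^ k) (∑' k, (k + 1) * a (k + 1) * x ^ k) x := by
  have hshift : (fun y => ∑' k, a k * y ^ k) = fun y => a 0 + ∑' k, a (k + 1) * y ^ (k + 1) := by
    funext y
    rw [(summable_mul_pow_of_abs_le ha y).tsum_eq_zero_add, pow_zero, mul_one]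
  rw [hshift]
  refine HasDerivAt.const_add _ ?_
  have hx : x ∈ Set.Ioo (-(|x| + 1)) (|x| + 1) := abs_lt.mp (by linarith)
  have hsum : Summable fun k => C * r * (r * (|x| + 1)) ^ k / k ! := by
    simpa only [mul_div_assoc] using (Real.summable_pow_div_factorial _).mul_left (C * r)
  have hderiv : ∀ (k : ℕ) (y : ℝ), y ∈ Set.Ioo (-(|x| + 1)) (|x| + 1) →
      HasDerivAt (fun y => a (k + 1) * y ^ (k + 1)) ((k + 1) * a (k + 1) * y ^ k) y :=
    fun k y _ => ((hasDerivAt_pow (k + 1) y).const_mul (a (k + 1))).congr_deriv (by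
      rw [Nat.add_sub_cancel]; push_cast; ring)
  have hbound : ∀ (k : ℕ) (y : ℝ), y ∈ Set.Ioo (-(|x| + 1)) (|x| + 1) →
      ‖(k + 1) * a (k + 1) * y ^ k‖ ≤ C * r * (r * (|x| + 1)) ^ k / k ! := fun k y hy =>
    abs_mul_pow_le_of_abs_le (abs_succ_mul_le_of_abs_le ha) (abs_lt.mpr hy).le k
  exact hasDerivAt_tsum_of_isPreconnected hsum isOpen_Ioo isPreconnected_Ioo hderiv hbound hx
    ((summable_nat_add_iff 1).mpr (summable_mul_pow_of_abs_le ha x)) hx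

theorem hasSum_natCast_mul_mul_pow (ha : ∀ k, |a k| ≤ C * r ^ k / k !) (x : ℝ) :
    HasSum (fun k : ℕ => k * a k * x ^ k) (x * ∑' k, (k + 1) * a (k + 1) * x ^ k) := by
  have hs := (summable_mul_pow_of_abs_le (abs_succ_mul_le_of_abs_le ha) x).hasSum.mul_left x
  have hshift : (fun k : ℕ => ((k + 1 : ℕ) : ℝ) * a (k + 1) * x ^ (k + 1))
      = fun k => x * ((k + 1) * a (k + 1) * x ^ k) := by
    funext k
    push_cast
    ring
  have h := hshift ▸ hs
  simpa using HasSum.zero_add (f := fun k : ℕ => (k : ℝ) * a k * x ^ k) h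

end FactorialDecay

theorem neg_two_mul_mul_div_le {x : ℝ} (hx : 0 < x) (c a b : ℝ) :
    -2 * c * a * b / x ≤ |c| * x ^ (-(3 / 2 : ℝ)) * (a ^ 2 + x * b ^ 2) := by
  have hs : 0 < √x := sqrt_pos.2 hx
  have hx32 : x ^ (-(3 / 2 : ℝ)) = 1 / (x * √x) := by
    rw [rpow_neg hx.le, show (3 / 2 : ℝ) = 1 + 1 / 2 by norm_num, rpow_add hx, rpow_one,
      ← sqrt_eq_rpow, one_div]
  have hsq : √x ^ 2 = x := sq_sqrt hx.le
  have key : -(2 * c * a * (√x * b)) ≤ |c| * (a ^ 2 + x * b ^ 2) := by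
    have hamgm := two_mul_le_add_sq |a| |√x * b|
    have habs : -(c * (a * (√x * b))) ≤ |c| * (|a| * |√x * b|) := by
      rw [← abs_mul, ← abs_mul]
      exact neg_le_abs _
    rw [sq_abs, sq_abs, mul_pow, hsq] at hamgm
    nlinarith [abs_nonneg c]
  calc -2 * c * a * b / x = -(2 * c * a * (√x * b)) / (x * √x) := by
        field_simp
    _ ≤ |c| * (a ^ 2 + x * b ^ 2) / (x * √x) := by gcongr
    _ = |c| * x ^ (-(3 / 2 : ℝ)) * (a ^ 2 + x * b ^ 2) := by
        rw [hx32]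
        ring

section EnergyEstimate

variable {A A' A'' : ℝ → ℝ} {c : ℝ}

theorem hasDerivAt_energy (hA : ∀ x > 0, HasDerivAt A (A' x) x)
    (hA' : ∀ x > 0, HasDerivAt A' (A'' x) x)
    (hode : ∀ x > 0, x ^ 2 * A'' x + x / 2 * A' x + (x + c) * A x = 0) {x : ℝ} (hx : 0 < x) :
    HasDerivAt (fun x => A x ^ 2 + x * A' x ^ 2) (-2 * c * A x * A' x / x) x := by
  refine (((hA x hx).pow 2).add ((hasDerivAt_id x).mul ((hA' x hx).pow 2))).congr_deriv ?_
  simp only [id_eq, Pi.pow_apply]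
  field_simp
  linear_combination (2 * A' x) * hode x hx

theorem antitoneOn_mul_exp_of_deriv_le {E E' : ℝ → ℝ}
    (hE : ∀ x > 0, HasDerivAt E (E' x) x)
    (hle : ∀ x > 0, E' x ≤ c * x ^ (-(3 / 2 : ℝ)) * E x) :
    AntitoneOn (fun x => E x * exp (2 * c * x ^ (-(1 / 2 : ℝ)))) (Set.Ioi 0) := by
  have hd : ∀ x > 0, HasDerivAt (fun x => E x * exp (2 * c * x ^ (-(1 / 2 : ℝ))))
      (exp (2 * c * x ^ (-(1 / 2 : ℝ))) * (E' x - c * x ^ (-(3 / 2 : ℝ)) * E x)) x := by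
    intro x hx
    refine ((hE x hx).mul (((hasDerivAt_rpow_const (Or.inl hx.ne')).const_mul
      (2 * c)).exp)).congr_deriv ?_
    rw [show -(1 / 2 : ℝ) - 1 = -(3 / 2) by norm_num]
    ring
  exact antitoneOn_of_hasDerivWithinAt_nonpos (convex_Ioi 0)
    (fun x hx => (hd x hx).continuousAt.continuousWithinAt)
    (fun x hx => (hd x (interior_subset hx)).hasDerivWithinAt)
    (fun x hx => mul_nonpos_of_nonneg_of_nonpos (exp_pos _).le
      (sub_nonpos.2 (hle x (interior_subset hx))))

theorem sq_le_mul_exp_of_ode (hA : ∀ x > 0, HasDerivAt A (A' x) x)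
    (hA' : ∀ x > 0, HasDerivAt A' (A'' x) x)
    (hode : ∀ x > 0, x ^ 2 * A'' x + x / 2 * A' x + (x + c) * A x = 0) {x : ℝ} (hx : 1 ≤ x) :
    A x ^ 2 ≤ (A 1 ^ 2 + A' 1 ^ 2) * exp (2 * |c|) := by
  have hx0 : 0 < x := by linarith
  have hanti := antitoneOn_mul_exp_of_deriv_le (fun x hx => hasDerivAt_energy hA hA' hode hx)
    (fun x hx => neg_two_mul_mul_div_le hx c (A x) (A' x))
  have h1x := hanti (Set.mem_Ioi.2 one_pos) (Set.mem_Ioi.2 hx0) hx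
  simp only [one_rpow, mul_one, one_mul] at h1x
  calc A x ^ 2 ≤ A x ^ 2 + x * A' x ^ 2 := le_add_of_nonneg_right (by positivity)
    _ ≤ (A x ^ 2 + x * A' x ^ 2) * exp (2 * |c| * x ^ (-(1 / 2 : ℝ))) :=
      le_mul_of_one_le_right (by positivity) (one_le_exp (by positivity))
    _ ≤ _ := h1x

end EnergyEstimate

theorem tendsto_atTop_zero_of_ode {μ : ℝ} (hμ : -1 / 2 < μ) {f f' f'' : ℝ → ℝ}
    (hf : ∀ x > 0, HasDerivAt f (f' x) x) (hf' : ∀ x > 0, HasDerivAt f' (f'' x) x)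
    (hode : ∀ x > 0, x * f'' x + (μ + 1) * f' x + f x = 0) : Tendsto f atTop (𝓝 0) := by
  set p := μ / 2 + 1 / 4 with hp_def
  have hp : 0 < p := by linarith
  have hA : ∀ x > 0, HasDerivAt (fun x => x ^ p * f x) (p * x ^ (p - 1) * f x + x ^ p * f' x) x :=
    fun x hx => (hasDerivAt_rpow_const (Or.inl hx.ne')).mul (hf x hx)
  have hA' : ∀ x > 0, HasDerivAt (fun x => p * x ^ (p - 1) * f x + x ^ p * f' x)
      (p * (p - 1) * x ^ (p - 2) * f x + 2 * p * x ^ (p - 1) * f' x + x ^ p * f'' x) x := by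
    intro x hx
    refine ((((hasDerivAt_rpow_const (Or.inl hx.ne')).const_mul p).mul (hf x hx)).add
      ((hasDerivAt_rpow_const (Or.inl hx.ne')).mul (hf' x hx))).congr_deriv ?_
    rw [sub_sub, one_add_one_eq_two]
    ring
  have hodeA : ∀ x > 0, x ^ 2 * (p * (p - 1) * x ^ (p - 2) * f x + 2 * p * x ^ (p - 1) * f' x
      + x ^ p * f'' x) + x / 2 * (p * x ^ (p - 1) * f x + x ^ p * f' x)
      + (x + (1 / 4 - μ ^ 2) / 4) * (x ^ p * f x) = 0 := by
    intro x hx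
    rw [rpow_sub hx, rpow_sub hx, rpow_one, rpow_two]
    generalize x ^ p = y
    rw [hp_def]
    field_simp
    linear_combination (64 * x * y) * hode x hx
  obtain ⟨K, hK⟩ : ∃ K, ∀ x ≥ 1, (x ^ p * f x) ^ 2 ≤ K :=
    ⟨_, fun x hx => sq_le_mul_exp_of_ode hA hA' hodeA hx⟩
  refine squeeze_zero_norm' (a := fun x => √K * x ^ (-p)) ?_
    (by simpa using (tendsto_rpow_neg_atTop hp).const_mul √K)
  filter_upwards [eventually_ge_atTop 1] with x hx
  have hx0 : 0 < x := by linarith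
  calc ‖f x‖ = |x ^ p * f x| * x ^ (-p) := by
        rw [abs_mul, abs_of_pos (rpow_pos_of_pos hx0 p), rpow_neg hx0.le, Real.norm_eq_abs]
        field_simp
    _ ≤ √K * x ^ (-p) := by gcongr; exact abs_le_sqrt (hK x hx)

theorem Gamma_mul_pow_le_Gamma_add_nat {s : ℝ} (hs : 0 < s) (k : ℕ) :
    Gamma s * s ^ k ≤ Gamma (s + k) := by
  induction k with
  | zero => simp
  | succ k ih =>
    have hsk : 0 < s + k := by positivity
    calc Gamma s * s ^ (k + 1) = s * (Gamma s * s ^ k) := by ring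
      _ ≤ (s + k) * Gamma (s + k) :=
        mul_le_mul (by linarith [k.cast_nonneg (α := ℝ)]) ih
          (mul_nonneg (Gamma_pos_of_pos hs).le (pow_nonneg hs.le k)) hsk.le
      _ = Gamma (s + (k + 1 : ℕ)) := by
        rw [Nat.cast_succ, ← add_assoc, Gamma_add_one hsk.ne']

noncomputable def tricomiCoeff (ν : ℝ) (k : ℕ) : ℝ :=
  (-1) ^ k / (k ! * Gamma (ν + k + 1))

theorem tricomiC_eq_tsum (ν x : ℝ) : tricomiC ν x = ∑' k, tricomiCoeff ν k * x ^ k := by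
  simp only [tricomiC, tricomiCoeff, div_mul_eq_mul_div]

theorem tricomiC_zero (ν : ℝ) : tricomiC ν 0 = 1 / Gamma (ν + 1) := by
  rw [tricomiC, tsum_eq_single 0 fun k hk => by simp [zero_pow hk]]
  simp

theorem succ_mul_tricomiCoeff_succ (ν : ℝ) (k : ℕ) :
    (k + 1) * tricomiCoeff ν (k + 1) = -tricomiCoeff (ν + 1) k := by
  rw [tricomiCoeff, tricomiCoeff, Nat.factorial_succ, pow_succ, Nat.cast_mul, Nat.cast_succ,
    show ν + (k + 1) + 1 = ν + 1 + k + 1 by ring]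
  field_simp

section Tricomi

variable {ν : ℝ}

theorem abs_tricomiCoeff_le (hν : -1 < ν) (k : ℕ) :
    |tricomiCoeff ν k| ≤ (Gamma (ν + 1))⁻¹ * (ν + 1)⁻¹ ^ k / k ! := by
  have hν' : 0 < ν + 1 := by linarith
  have hΓ := Gamma_mul_pow_le_Gamma_add_nat hν' k
  rw [add_right_comm] at hΓ
  have hpos : 0 < Gamma (ν + 1) * (ν + 1) ^ k := by
    have := Gamma_pos_of_pos hν'
    positivity
  calc |tricomiCoeff ν k| = 1 / (k ! * Gamma (ν + k + 1)) := by
        rw [tricomiCoeff, abs_div, abs_pow, abs_neg, abs_one, one_pow,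
          abs_of_pos (by have := hpos.trans_le hΓ; positivity)]
    _ ≤ 1 / (k ! * (Gamma (ν + 1) * (ν + 1) ^ k)) := by gcongr
    _ = (Gamma (ν + 1))⁻¹ * (ν + 1)⁻¹ ^ k / k ! := by
        rw [inv_pow]
        field_simp

theorem tricomiCoeff_eq_mul_tricomiCoeff_add_one (hν : -1 < ν) (k : ℕ) :
    tricomiCoeff ν k = (ν + k + 1) * tricomiCoeff (ν + 1) k := by
  have hνk : 0 < ν + k + 1 := by have := k.cast_nonneg (α := ℝ); linarith
  rw [tricomiCoeff, tricomiCoeff, show ν + 1 + k + 1 = ν + k + 1 + 1 by ring,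
    Gamma_add_one hνk.ne']
  have := Gamma_pos_of_pos hνk
  field_simp

theorem hasDerivAt_tricomiC (hν : -1 < ν) (x : ℝ) :
    HasDerivAt (tricomiC ν) (-tricomiC (ν + 1) x) x := by
  have h := hasDerivAt_tsum_mul_pow (abs_tricomiCoeff_le hν) x
  simpa only [← tricomiC_eq_tsum, succ_mul_tricomiCoeff_succ, neg_mul, tsum_neg] using h

theorem tricomiC_recurrence (hν : -1 < ν) (x : ℝ) :
    x * tricomiC (ν + 2) x - (ν + 1) * tricomiC (ν + 1) x + tricomiC ν x = 0 := by
  have hν' : -1 < ν + 1 := by linarith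
  have h := ((summable_mul_pow_of_abs_le (abs_tricomiCoeff_le hν') x).hasSum.mul_left
    (ν + 1)).add (hasSum_natCast_mul_mul_pow (abs_tricomiCoeff_le hν') x)
  simp only [succ_mul_tricomiCoeff_succ, neg_mul, tsum_neg, ← tricomiC_eq_tsum,
    show ν + 1 + 1 = ν + 2 by ring] at h
  have hsplit : ∀ k : ℕ, tricomiCoeff ν k * x ^ k
      = (ν + 1) * (tricomiCoeff (ν + 1) k * x ^ k) + k * tricomiCoeff (ν + 1) k * x ^ k := by
    intro k
    rw [tricomiCoeff_eq_mul_tricomiCoeff_add_one hν]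
    ring
  rw [tricomiC_eq_tsum ν, (h.congr_fun hsplit).tsum_eq]
  ring

theorem tendsto_tricomiC_atTop (hν : -1 / 2 < ν) : Tendsto (tricomiC ν) atTop (𝓝 0) := by
  refine tendsto_atTop_zero_of_ode hν (f' := fun x => -tricomiC (ν + 1) x)
    (f'' := tricomiC (ν + 2)) (fun x _ => hasDerivAt_tricomiC (by linarith) x) (fun x _ => ?_)
    (fun x _ => ?_)
  · have h := (hasDerivAt_tricomiC (by linarith : -1 < ν + 1) x).neg
    rwa [neg_neg, add_assoc, one_add_one_eq_two] at h
  · linear_combination tricomiC_recurrence (by linarith : -1 < ν) x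

end Tricomi

/-- For ν > 1, the improper integral ∫₀^∞ C_ν(x) dx equals 1/Γ(ν). -/
theorem stmt_15 (ν : ℝ) (hν : 1 < ν) :
    Tendsto (fun R : ℝ => ∫ x in (0 : ℝ)..R, tricomiC ν x) atTop
      (𝓝 (1 / Real.Gamma ν)) := by
  have hderiv : ∀ x, HasDerivAt (fun y => -tricomiC (ν - 1) y) (tricomiC ν x) x := fun x => by
    have h := (hasDerivAt_tricomiC (by linarith : -1 < ν - 1) x).neg
    rwa [sub_add_cancel, neg_neg] at h
  have hcont : Continuous (tricomiC ν) := continuous_iff_continuousAt.2 fun x =>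
    (hasDerivAt_tricomiC (by linarith) x).continuousAt
  have hint : ∀ R, ∫ x in (0 : ℝ)..R, tricomiC ν x = 1 / Gamma ν - tricomiC (ν - 1) R := by
    intro R
    rw [intervalIntegral.integral_eq_sub_of_hasDerivAt (fun x _ => hderiv x)
      (hcont.intervalIntegrable 0 R), tricomiC_zero, sub_add_cancel]
    ring
  simpa only [hint, sub_zero] using
    tendsto_const_nhds.sub (tendsto_tricomiC_atTop (by linarith : -1 / 2 < ν - 1))
end
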